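/- If N is a semi-regular flat R-module and F is a flat R-module, then N ⊗_R F is semi-regular flat. -/

import Mathlib

open CategoryTheory

noncomputable section

/-- An ideal is semi-regular if it contains a finitely generated subideal
with zero annihilator. -/
def Ideal.IsSemiregular {R : Type} [CommRing R] (I : Ideal R) : Prop :=
  ∃ J : Ideal R, J ≤ I ∧ J.FG ∧ Submodule.annihilator J = ⊥

/-- A module is semi-regular flat if `Tor₁(R/I, M) = 0` for every finitely generated
semi-regular ideal `I`. -/
def IsSemiregularFlat (R : Type) [CommRing R] (M : Type) [AddCommGroup M] [Module R M] : Prop :=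
  ∀ I : Ideal R, I.FG → I.IsSemiregular →
    Limits.IsZero (((Tor (ModuleCat R) 1).obj (ModuleCat.of R (R ⧸ I))).obj (ModuleCat.of R M))

open Limits TensorProduct LinearMap

/-!
`Tor₁(R/I, M)` vanishes exactly when `I ⊗ M → R ⊗ M` is injective: computing `Tor₁` from a
projective resolution `P₁ → P₀ → M` with kernel `K = ker (P₀ → M)`, its vanishing means that
`R/I ⊗ K → R/I ⊗ P₀` is injective, and a diagram chase in the `3 × 3` diagram obtained by
tensoring `0 → I → R → R/I → 0` with `0 → K → P₀ → M → 0` (degree-one balancing of `Tor`)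
identifies this with injectivity of `I ⊗ M → R ⊗ M`. Since `F` is flat and
`I ⊗ (N ⊗ F) ≅ (I ⊗ N) ⊗ F`, injectivity of `I ⊗ N → R ⊗ N` survives tensoring with `F`.
-/

lemma LinearMap.rTensor_lTensor_apply {R M N P Q : Type*} [CommSemiring R]
    [AddCommMonoid M] [Module R M] [AddCommMonoid N] [Module R N]
    [AddCommMonoid P] [Module R P] [AddCommMonoid Q] [Module R Q]
    (f : M →ₗ[R] N) (g : P →ₗ[R] Q) (x : M ⊗[R] P) :
    rTensor Q f (lTensor M g x) = lTensor N g (rTensor P f x) := by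
  rw [← comp_apply, rTensor_comp_lTensor, ← lTensor_comp_rTensor, comp_apply]

lemma LinearMap.injective_lTensor_iff_injective_rTensor {R M N Q : Type*} [CommSemiring R]
    [AddCommMonoid M] [Module R M] [AddCommMonoid N] [Module R N] [AddCommMonoid Q] [Module R Q]
    (f : M →ₗ[R] N) : Function.Injective (lTensor Q f) ↔ Function.Injective (rTensor Q f) := by
  rw [← comm_comp_rTensor_comp_comm_eq]
  simp only [coe_comp, LinearEquiv.coe_coe, EquivLike.comp_injective, EquivLike.injective_comp]

lemma Function.Exact.exact_comp_iff_injective {R M N P Q : Type*} [Semiring R]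
    [AddCommGroup M] [Module R M] [AddCommGroup N] [Module R N] [AddCommGroup P] [Module R P]
    [AddCommGroup Q] [Module R Q] {f : M →ₗ[R] N} {g : N →ₗ[R] P} (h : P →ₗ[R] Q)
    (hfg : Function.Exact f g) (hg : Function.Surjective g) :
    Function.Exact f (h ∘ₗ g) ↔ Function.Injective h := by
  refine ⟨fun hfhg => ?_, fun hh => hh.comp_exact_iff_exact.2 hfg⟩
  rw [injective_iff_map_eq_zero]
  rintro _ hx
  obtain ⟨y, rfl⟩ := hg ‹_›
  obtain ⟨z, rfl⟩ := (hfhg y).1 hx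
  exact hfg.apply_apply_eq_zero z

section Balance

variable {R A' A A'' B' B B'' : Type*} [CommRing R]
  [AddCommGroup A'] [Module R A'] [AddCommGroup A] [Module R A] [AddCommGroup A''] [Module R A'']
  [AddCommGroup B'] [Module R B'] [AddCommGroup B] [Module R B] [AddCommGroup B''] [Module R B'']
  {i : A' →ₗ[R] A} {p : A →ₗ[R] A''} {j : B' →ₗ[R] B} {q : B →ₗ[R] B''}

lemma injective_rTensor_of_injective_lTensor_of_flat [Module.Flat R B]
    (hi : Function.Injective i) (hip : Function.Exact i p) (hp : Function.Surjective p)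
    (hjq : Function.Exact j q) (hq : Function.Surjective q)
    (h : Function.Injective (lTensor A'' j)) : Function.Injective (rTensor B'' i) := by
  rw [injective_iff_map_eq_zero]
  intro t ht
  obtain ⟨s, rfl⟩ := lTensor_surjective A' hq t
  obtain ⟨u, hu⟩ : rTensor B i s ∈ range (lTensor A j) :=
    (lTensor_exact A hjq hq _).1 (by rwa [← rTensor_lTensor_apply])
  obtain ⟨v, rfl⟩ : u ∈ range (rTensor B' i) := by
    refine (rTensor_exact B' hip hp _).1 (h ?_)
    rw [← rTensor_lTensor_apply, hu, ← rTensor_comp_apply, hip.linearMap_comp_eq_zero,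
      rTensor_zero, LinearMap.zero_apply, map_zero]
  have hs : lTensor A' j v = s :=
    Module.Flat.rTensor_preserves_injective_linearMap _ hi (by rw [← hu, rTensor_lTensor_apply])
  rw [← hs, ← lTensor_comp_apply, hjq.linearMap_comp_eq_zero, lTensor_zero, LinearMap.zero_apply]

lemma injective_lTensor_iff_injective_rTensor_of_flat [Module.Flat R A] [Module.Flat R B]
    (hi : Function.Injective i) (hip : Function.Exact i p) (hp : Function.Surjective p)
    (hj : Function.Injective j) (hjq : Function.Exact j q) (hq : Function.Surjective q) :
    Function.Injective (lTensor A'' j) ↔ Function.Injective (rTensor B'' i) := by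
  refine ⟨injective_rTensor_of_injective_lTensor_of_flat hi hip hp hjq hq, fun h => ?_⟩
  rw [injective_lTensor_iff_injective_rTensor]
  exact injective_rTensor_of_injective_lTensor_of_flat hj hjq hq hip hp
    ((injective_lTensor_iff_injective_rTensor i).2 h)

end Balance

universe u

lemma isZero_Tor_one_iff_exact {R : Type u} [CommRing R] (X : ModuleCat.{u} R)
    {M : ModuleCat.{u} R} (P : ProjectiveResolution M) :
    IsZero (((Tor (ModuleCat R) 1).obj X).obj M) ↔
      Function.Exact (lTensor X (P.complex.d 2 1).hom) (lTensor X (P.complex.d 1 0).hom) := by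
  let T := (MonoidalCategory.tensoringLeft (ModuleCat R)).obj X
  have e : ((Tor (ModuleCat R) 1).obj X).obj M ≅
      ((T.mapHomologicalComplex _).obj P.complex).homology 1 :=
    P.isoLeftDerivedObj T 1
  rw [e.isZero_iff, ← HomologicalComplex.exactAt_iff_isZero_homology,
    HomologicalComplex.exactAt_iff' _ 2 1 0 (by simp) (by simp),
    ShortComplex.ShortExact.moduleCat_exact_iff_function_exact]
  rfl

lemma isZero_Tor_one_iff_injective_rTensor {R A' A A'' : Type u} [CommRing R]
    [AddCommGroup A'] [Module R A'] [AddCommGroup A] [Module R A] [AddCommGroup A''] [Module R A'']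
    [Module.Flat R A] {i : A' →ₗ[R] A} {p : A →ₗ[R] A''}
    (hi : Function.Injective i) (hip : Function.Exact i p) (hp : Function.Surjective p)
    (M : Type u) [AddCommGroup M] [Module R M] :
    IsZero (((Tor (ModuleCat R) 1).obj (ModuleCat.of R A'')).obj (ModuleCat.of R M)) ↔
      Function.Injective (rTensor M i) := by
  obtain ⟨P⟩ := HasProjectiveResolution.out (Z := ModuleCat.of R M)
  have : Module.Projective R (P.complex.X 0) :=
    (IsProjective.iff_projective _).mpr (P.projective 0)
  let d₂ := (P.complex.d 2 1).hom
  let d₁ := (P.complex.d 1 0).hom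
  let ε : P.complex.X 0 →ₗ[R] M := (P.π.f 0).hom
  have h21 : Function.Exact d₂ d₁ :=
    (ShortComplex.ShortExact.moduleCat_exact_iff_function_exact _).1 (P.exact_succ 0)
  have h10 : Function.Exact d₁ ε :=
    (ShortComplex.ShortExact.moduleCat_exact_iff_function_exact _).1
      (ShortComplex.exact_of_g_is_cokernel (ShortComplex.mk _ _ P.complex_d_comp_π_f_zero)
        P.isColimitCokernelCofork)
  have hε : Function.Surjective ε := (ModuleCat.epi_iff_surjective _).1 inferInstance
  have hd₁ : (range d₁).subtype ∘ₗ d₁.rangeRestrict = d₁ := rfl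
  have h2π : Function.Exact d₂ d₁.rangeRestrict :=
    (Submodule.injective_subtype _).comp_exact_iff_exact.1 (hd₁ ▸ h21)
  have hKε : Function.Exact (range d₁).subtype ε := by
    rw [LinearMap.exact_iff, Submodule.range_subtype, h10.linearMap_ker_eq]
  rw [isZero_Tor_one_iff_exact _ P]
  change Function.Exact (lTensor A'' d₂) (lTensor A'' d₁) ↔ _
  rw [← hd₁, lTensor_comp,
    (lTensor_exact _ h2π (surjective_rangeRestrict d₁)).exact_comp_iff_injective _
      (lTensor_surjective _ (surjective_rangeRestrict d₁))]
  exact injective_lTensor_iff_injective_rTensor_of_flat hi hip hp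
    (Submodule.injective_subtype _) hKε hε

/-- If `N` is semi-regular flat and `F` is flat, then `N ⊗ F` is semi-regular flat. -/
theorem isSemiregularFlat_tensor (R : Type) [CommRing R]
    (N : Type) [AddCommGroup N] [Module R N]
    (F : Type) [AddCommGroup F] [Module R F] [Module.Flat R F]
    (hN : IsSemiregularFlat R N) :
    IsSemiregularFlat R (TensorProduct R N F) := by
  intro I hfg hsr
  have tor_iff := fun M [AddCommGroup M] [Module R M] => isZero_Tor_one_iff_injective_rTensor
    I.injective_subtype (LinearMap.exact_subtype_mkQ I) I.mkQ_surjective M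
  have hIN : Function.Injective (rTensor N I.subtype) := (tor_iff N).1 (hN I hfg hsr)
  rw [tor_iff, rTensor_tensor]
  simpa only [coe_comp, LinearEquiv.coe_coe, EquivLike.comp_injective, EquivLike.injective_comp]
    using Module.Flat.rTensor_preserves_injective_linearMap (M := F) _ hIN

end
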